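/- arXiv:2604.00445 — 2 statements merged into one kernel-verified Lean document; each statement's English description precedes it below -/
import Mathlib

section
/- Let P_+ and P_- be probability distributions on the reals with P_+ absolutely continuous, and let S_+ ~ P_+ and S_- ~ P_- be independent. Then |P(S_+ > S_-) - 1/2| ≤ δ(P_+, P_-), where δ denotes the total variation distance between P_+ and P_-. -/
open MeasureTheory
open scoped ENNReal

-- Total variation distance between measures: sup over measurable sets.
noncomputable def tv {α : Type*} [MeasurableSpace α] (P Q : Measure α) : ℝ :=
  ⨆ A : {s : Set α // MeasurableSet s}, |(P A.1).toReal - (Q A.1).toReal|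

lemma tv_ge {α : Type*} [MeasurableSpace α] (P Q : Measure α)
    [IsProbabilityMeasure P] [IsProbabilityMeasure Q] {A : Set α} (hA : MeasurableSet A) :
    |(P A).toReal - (Q A).toReal| ≤ tv P Q := by
  refine le_ciSup (f := fun A : {s : Set α // MeasurableSet s} =>
    |(P A.1).toReal - (Q A.1).toReal|) ?_ ⟨A, hA⟩
  refine ⟨1, ?_⟩
  rintro x ⟨⟨B, hB⟩, rfl⟩
  have h1 : (P B).toReal ≤ 1 := by
    have := prob_le_one (μ := P) (s := B)
    simpa using ENNReal.toReal_mono ENNReal.one_ne_top this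
  have h2 : (Q B).toReal ≤ 1 := by
    have := prob_le_one (μ := Q) (s := B)
    simpa using ENNReal.toReal_mono ENNReal.one_ne_top this
  have h3 : 0 ≤ (P B).toReal := ENNReal.toReal_nonneg
  have h4 : 0 ≤ (Q B).toReal := ENNReal.toReal_nonneg
  rw [abs_sub_le_iff]
  constructor <;> linarith

-- STATEMENT 1: for independent S₊ ~ P₊ (absolutely continuous) and S₋ ~ P₋,
-- |P(S₊ > S₋) - 1/2| ≤ δ(P₊, P₋).  Independence is captured by the product measure.
theorem stmt1 (Pp Pm : Measure ℝ) [IsProbabilityMeasure Pp] [IsProbabilityMeasure Pm]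
    (hac : Pp ≪ MeasureTheory.volume) :
    |((Pp.prod Pm) {x : ℝ × ℝ | x.1 > x.2}).toReal - 1 / 2| ≤ tv Pp Pm := by
  set S : Set (ℝ × ℝ) := {x : ℝ × ℝ | x.1 > x.2} with hSdef
  have hS : MeasurableSet S := measurableSet_lt measurable_snd measurable_fst
  -- slices
  have hpre : ∀ s : ℝ, Prod.mk s ⁻¹' S = Set.Iio s := by
    intro s; ext y; simp [hSdef, Set.mem_Iio]
  have hprod : ∀ (ν : Measure ℝ) [SFinite ν], (Pp.prod ν) S = ∫⁻ s, ν (Set.Iio s) ∂Pp := by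
    intro ν _
    rw [Measure.prod_apply hS]
    refine lintegral_congr fun s => by rw [hpre s]
  -- diagonal has measure zero
  have hdiagmeas : MeasurableSet {x : ℝ × ℝ | x.1 = x.2} :=
    measurableSet_eq_fun measurable_fst measurable_snd
  have hdiag : (Pp.prod Pp) {x : ℝ × ℝ | x.1 = x.2} = 0 := by
    rw [Measure.prod_apply hdiagmeas]
    have h : ∀ s : ℝ, Pp (Prod.mk s ⁻¹' {x : ℝ × ℝ | x.1 = x.2}) = 0 := by
      intro s
      have he : Prod.mk s ⁻¹' {x : ℝ × ℝ | x.1 = x.2} = {s} := by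
        ext y; simp [eq_comm]
      rw [he]
      exact hac (by simp)
    have h2 : ∀ s : ℝ, Pp {s} = 0 := fun s => hac (by simp)
    simp only [h, lintegral_zero]
  -- swap symmetry
  have hltmeas : MeasurableSet {x : ℝ × ℝ | x.1 < x.2} :=
    measurableSet_lt measurable_fst measurable_snd
  have hswap : (Pp.prod Pp) S = (Pp.prod Pp) {x : ℝ × ℝ | x.1 < x.2} := by
    calc (Pp.prod Pp) S = (Measure.map Prod.swap (Pp.prod Pp)) S := by
          rw [Measure.prod_swap]
      _ = (Pp.prod Pp) (Prod.swap ⁻¹' S) := Measure.map_apply measurable_swap hS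
      _ = (Pp.prod Pp) {x : ℝ × ℝ | x.1 < x.2} := rfl
  -- the value 1/2
  have hhalfR : ((Pp.prod Pp) S).toReal = 1 / 2 := by
    have hdisj : Disjoint S {x : ℝ × ℝ | x.1 < x.2} := by
      rw [Set.disjoint_left]
      rintro ⟨a, b⟩ h1 h2
      simp only [hSdef, Set.mem_setOf_eq] at h1 h2
      exact absurd h1 (not_lt.2 h2.le)
    have hle1 : (1 : ℝ≥0∞) ≤ (Pp.prod Pp) S + (Pp.prod Pp) {x : ℝ × ℝ | x.1 < x.2} := by
      have hcover : (Set.univ : Set (ℝ × ℝ)) ⊆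
          S ∪ {x : ℝ × ℝ | x.1 < x.2} ∪ {x : ℝ × ℝ | x.1 = x.2} := by
        rintro ⟨a, b⟩ -
        rcases lt_trichotomy a b with h | h | h
        · exact Or.inl (Or.inr h)
        · exact Or.inr h
        · exact Or.inl (Or.inl h)
      calc (1 : ℝ≥0∞) = (Pp.prod Pp) Set.univ := measure_univ.symm
        _ ≤ (Pp.prod Pp) (S ∪ {x : ℝ × ℝ | x.1 < x.2} ∪ {x : ℝ × ℝ | x.1 = x.2}) :=
            measure_mono hcover
        _ ≤ (Pp.prod Pp) (S ∪ {x : ℝ × ℝ | x.1 < x.2}) + (Pp.prod Pp) {x : ℝ × ℝ | x.1 = x.2} :=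
            measure_union_le _ _
        _ = (Pp.prod Pp) (S ∪ {x : ℝ × ℝ | x.1 < x.2}) := by rw [hdiag, add_zero]
        _ ≤ (Pp.prod Pp) S + (Pp.prod Pp) {x : ℝ × ℝ | x.1 < x.2} := measure_union_le _ _
    have hge1 : (Pp.prod Pp) S + (Pp.prod Pp) {x : ℝ × ℝ | x.1 < x.2} ≤ 1 := by
      rw [← measure_union hdisj hltmeas]
      exact prob_le_one
    have heq : (Pp.prod Pp) S + (Pp.prod Pp) {x : ℝ × ℝ | x.1 < x.2} = 1 :=
      le_antisymm hge1 hle1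
    rw [← hswap] at heq
    have hfin : (Pp.prod Pp) S ≠ ∞ := measure_ne_top _ _
    have := congrArg ENNReal.toReal heq
    rw [ENNReal.toReal_add hfin hfin, ENNReal.toReal_one] at this
    linarith
  -- measurability of CDF-like functions
  have hmeas : ∀ (ν : Measure ℝ) [SFinite ν], Measurable (fun s => ν (Set.Iio s)) := by
    intro ν _
    have h := measurable_measure_prodMk_left (ν := ν) hS
    have he : (fun x => ν (Prod.mk x ⁻¹' S)) = fun s => ν (Set.Iio s) :=
      funext fun s => by rw [hpre s]
    rwa [he] at h
  -- Bochner integral representation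
  have hint : ∀ (ν : Measure ℝ) [SFinite ν] [IsFiniteMeasure ν],
      ((Pp.prod ν) S).toReal = ∫ s, (ν (Set.Iio s)).toReal ∂Pp := by
    intro ν _ _
    rw [hprod ν, ← integral_toReal (hmeas ν).aemeasurable
      (ae_of_all _ fun s => measure_lt_top ν _)]
  -- integrability
  have hintg : ∀ (ν : Measure ℝ) [SFinite ν] [IsProbabilityMeasure ν],
      Integrable (fun s => (ν (Set.Iio s)).toReal) Pp := by
    intro ν _ _
    refine (integrable_const (1 : ℝ)).mono'
      ((hmeas ν).ennreal_toReal.aestronglyMeasurable) (ae_of_all _ fun s => ?_)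
    rw [Real.norm_eq_abs, abs_of_nonneg ENNReal.toReal_nonneg]
    have := prob_le_one (μ := ν) (s := Set.Iio s)
    simpa using ENNReal.toReal_mono ENNReal.one_ne_top this
  -- key rewriting
  have key : ((Pp.prod Pm) S).toReal - 1 / 2
      = ∫ s, ((Pm (Set.Iio s)).toReal - (Pp (Set.Iio s)).toReal) ∂Pp := by
    rw [integral_sub (hintg Pm) (hintg Pp), ← hint Pm, ← hint Pp, hhalfR]
  rw [key]
  have hbound : ∀ s : ℝ, ‖(Pm (Set.Iio s)).toReal - (Pp (Set.Iio s)).toReal‖ ≤ tv Pp Pm := by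
    intro s
    rw [Real.norm_eq_abs, abs_sub_comm]
    exact tv_ge Pp Pm measurableSet_Iio
  calc |∫ s, ((Pm (Set.Iio s)).toReal - (Pp (Set.Iio s)).toReal) ∂Pp|
      = ‖∫ s, ((Pm (Set.Iio s)).toReal - (Pp (Set.Iio s)).toReal) ∂Pp‖ :=
        (Real.norm_eq_abs _).symm
    _ ≤ tv Pp Pm * (Pp Set.univ).toReal :=
        norm_integral_le_of_norm_le_const (ae_of_all _ hbound)
    _ = tv Pp Pm := by simp
end

section
/- Let C be Bernoulli with P(C=1) = p ∈ (0,1), and let S be any real-valued score with class-conditional distributions P_+ and P_- (with P_+ absolutely continuous). Define AUC(S) = P(S_+ > S_-) for independent S_+ ~ P_+, S_- ~ P_-. Then |AUC(S) - 1/2| ≤ sqrt( I(C;S) / (2·p·(1-p)) ). -/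
/-
Let M = p P₊ + (1 - p) P₋. The mutual information splits as
I(C;S) = p KL(P₊ ‖ M) + (1 - p) KL(P₋ ‖ M). Test both laws against h(y) = P₊(S > y) ∈ [0, 1]:
∫ h dP₋ is the AUC, ∫ h dP₊ = 1/2 because P₊ has no atoms (ties are null and the two orders of
an independent pair are exchangeable), and ∫ h dM is the p-average of the two. Pinsker's
inequality 2 (∫ h dP - ∫ h dQ)² ≤ KL(P ‖ Q) against M gives 2 (1 - p)² δ² ≤ KL(P₊ ‖ M) and
2 p² δ² ≤ KL(P₋ ‖ M) with δ = AUC - 1/2; weighting by p and 1 - p gives 2 p (1 - p) δ² ≤ I(C;S).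

Pinsker's inequality is obtained by integrating against Q, at t = dP/dQ, w = 2h - 1 and
s = ∫ h dP - ∫ h dQ, the pointwise bound 2 s w (t - 1) - (2/3) s² (t + 2) ≤ t log t - t + 1,
which follows from 3 (t - 1)² ≤ 2 (t + 2) (t log t - t + 1). Since `kl` is a Bochner integral,
the log-likelihood ratios must be shown integrable; this holds because dP₊/dM ≤ 1/p and
dP₋/dM ≤ 1/(1 - p).
-/

open MeasureTheory
open scoped ENNReal

noncomputable def kl {α : Type*} [MeasurableSpace α] (P Q : Measure α) : ℝ :=
  ∫ x, Real.log (P.rnDeriv Q x).toReal ∂P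

open Real Set InformationTheory

lemma monotoneOn_add_one_mul_log_sub :
    MonotoneOn (fun t : ℝ ↦ (t + 1) * log t - 2 * (t - 1)) (Ioi 0) := by
  have hderiv : ∀ t ∈ Ioi (0 : ℝ),
      HasDerivAt (fun t ↦ (t + 1) * log t - 2 * (t - 1)) (log t + t⁻¹ - 1) t := by
    intro t ht
    refine ((((hasDerivAt_id' t).add_const 1).fun_mul (hasDerivAt_log (ne_of_gt ht))).fun_sub
      (((hasDerivAt_id' t).sub_const 1).const_mul 2)).congr_deriv ?_
    field_simp [(mem_Ioi.1 ht).ne']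
    ring
  refine monotoneOn_of_hasDerivWithinAt_nonneg (convex_Ioi 0)
    (fun t ht ↦ (hderiv t ht).continuousAt.continuousWithinAt)
    (fun t ht ↦ (hderiv t (interior_subset ht)).hasDerivWithinAt) fun t ht ↦ ?_
  rw [interior_Ioi] at ht
  linarith [one_sub_inv_le_log_of_pos ht]

lemma three_mul_sq_sub_one_le_mul_klFun {t : ℝ} (ht : 0 ≤ t) :
    3 * (t - 1) ^ 2 ≤ 2 * (t + 2) * klFun t := by
  set g : ℝ → ℝ := fun t ↦ (t + 1) * log t - 2 * (t - 1)
  set ψ : ℝ → ℝ := fun t ↦ 2 * (t + 2) * klFun t - 3 * (t - 1) ^ 2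
  have hderiv : ∀ t ∈ Ioi (0 : ℝ), HasDerivAt ψ (4 * g t) t := by
    intro t ht
    refine (((((hasDerivAt_id' t).add_const 2).const_mul 2).fun_mul
      (hasDerivAt_klFun (ne_of_gt ht))).fun_sub
      ((((hasDerivAt_id' t).sub_const 1).fun_pow 2).const_mul 3)).congr_deriv ?_
    simp only [g, klFun]
    ring
  have hcont : ∀ D ⊆ Ioi (0 : ℝ), ContinuousOn ψ D := fun D hD t ht ↦
    (hderiv t (hD ht)).continuousAt.continuousWithinAt
  have hg1 : g 1 = 0 := by simp [g]
  have hψ1 : ψ 1 = 0 := by simp [ψ, klFun_one]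
  suffices 0 ≤ ψ t by simp only [ψ] at this; linarith
  rcases ht.eq_or_lt with rfl | ht
  · norm_num [ψ, klFun_zero]
  rcases le_total t 1 with ht1 | ht1
  · refine hψ1 ▸ antitoneOn_of_hasDerivWithinAt_nonpos (convex_Ioc 0 1)
      (hcont _ Ioc_subset_Ioi_self)
      (fun x hx ↦ (hderiv x (interior_subset hx).1).hasDerivWithinAt) (fun x hx ↦ ?_)
      ⟨ht, ht1⟩ ⟨one_pos, le_rfl⟩ ht1
    rw [interior_Ioc] at hx
    linarith [monotoneOn_add_one_mul_log_sub hx.1 (mem_Ioi.2 one_pos) hx.2.le, hg1]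
  · refine hψ1 ▸ monotoneOn_of_hasDerivWithinAt_nonneg (convex_Ici 1)
      (hcont _ fun x (hx : 1 ≤ x) ↦ mem_Ioi.2 (one_pos.trans_le hx))
      (fun x hx ↦ (hderiv x (lt_of_lt_of_le one_pos (interior_subset hx))).hasDerivWithinAt)
      (fun x hx ↦ ?_) self_mem_Ici ht1 ht1
    rw [interior_Ici] at hx
    linarith [monotoneOn_add_one_mul_log_sub (mem_Ioi.2 one_pos) (mem_Ioi.2 (one_pos.trans hx))
      hx.le, hg1]

lemma le_klFun_of_abs_le_one {t w : ℝ} (ht : 0 ≤ t) (hw : |w| ≤ 1) (s : ℝ) :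
    2 * s * w * (t - 1) - 2 / 3 * s ^ 2 * (t + 2) ≤ klFun t := by
  have hw2 : w ^ 2 ≤ 1 := by nlinarith [abs_nonneg w, sq_abs w]
  nlinarith [three_mul_sq_sub_one_le_mul_klFun ht, sq_nonneg (w * (t - 1) - 2 / 3 * s * (t + 2)),
    mul_le_mul_of_nonneg_right hw2 (sq_nonneg (t - 1))]

section Pinsker

variable {α : Type*} [MeasurableSpace α] {P Q : Measure α}

lemma kl_eq_integral_llr : kl P Q = ∫ x, llr P Q x ∂P := rfl

theorem two_mul_sq_integral_sub_le_kl [IsProbabilityMeasure P] [IsProbabilityMeasure Q]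
    (hPQ : P ≪ Q) (hint : Integrable (llr P Q) P) {h : α → ℝ} (hm : AEMeasurable h Q)
    (hh : ∀ x, h x ∈ Icc 0 1) :
    2 * (∫ x, h x ∂P - ∫ x, h x ∂Q) ^ 2 ≤ kl P Q := by
  set D := ∫ x, h x ∂P - ∫ x, h x ∂Q
  set f : α → ℝ := fun x ↦ (P.rnDeriv Q x).toReal
  have hf : Integrable f Q := Measure.integrable_toReal_rnDeriv
  have hhQ : Integrable h Q := .of_mem_Icc 0 1 hm (.of_forall hh)
  have hfh : Integrable (fun x ↦ f x * h x) Q :=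
    (integrable_rnDeriv_smul_iff hPQ).2 (.of_mem_Icc 0 1 (hm.mono_ac hPQ) (.of_forall hh))
  have hPh : ∫ x, f x * h x ∂Q = ∫ x, h x ∂P := integral_rnDeriv_smul hPQ
  -- `le_klFun_of_abs_le_one` at `t = f x`, `w = 2 h x - 1`, `s = D`, expanded term by term
  have hlin : ∫ x, (4 * D * (f x * h x) - 4 * D * h x - (2 * D + 2 / 3 * D ^ 2) * f x
      + (2 * D - 4 / 3 * D ^ 2)) ∂Q = 2 * D ^ 2 := by
    rw [integral_add (by fun_prop) (integrable_const _), integral_sub (by fun_prop) (by fun_prop),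
      integral_sub (by fun_prop) (by fun_prop), integral_const_mul, integral_const_mul,
      integral_const_mul, hPh, Measure.integral_toReal_rnDeriv hPQ, integral_const]
    simp only [probReal_univ, smul_eq_mul, one_mul]
    ring
  calc 2 * D ^ 2 = _ := hlin.symm
    _ ≤ ∫ x, klFun (f x) ∂Q := by
      refine integral_mono (by fun_prop) ((integrable_klFun_rnDeriv_iff hPQ).2 hint) fun x ↦ ?_
      have hw : |2 * h x - 1| ≤ 1 := abs_le.2 ⟨by linarith [(hh x).1], by linarith [(hh x).2]⟩
      linarith [le_klFun_of_abs_le_one ENNReal.toReal_nonneg hw D (t := f x)]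
    _ = kl P Q := by rw [integral_klFun_rnDeriv hPQ hint]; simp [kl_eq_integral_llr]

lemma integrable_llr_of_rnDeriv_le [IsFiniteMeasure P] [IsFiniteMeasure Q] (hPQ : P ≪ Q)
    {C : ℝ} (hC : ∀ᵐ x ∂Q, (P.rnDeriv Q x).toReal ≤ C) :
    Integrable (llr P Q) P := by
  rw [← integrable_klFun_rnDeriv_iff hPQ]
  refine .of_bound (measurable_klFun.comp (Measure.measurable_rnDeriv P Q).ennreal_toReal
    ).aestronglyMeasurable (max (klFun 0) (klFun C)) ?_
  filter_upwards [hC] with x hx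
  have h0 : 0 ≤ (P.rnDeriv Q x).toReal := ENNReal.toReal_nonneg
  rw [norm_of_nonneg (klFun_nonneg h0)]
  exact convexOn_klFun.le_max_of_mem_Icc self_mem_Ici (h0.trans hx) ⟨h0, hx⟩

end Pinsker

section DiracProd

variable {α β : Type*} [MeasurableSpace α] [MeasurableSpace β] {ν : Measure α} [SFinite ν]

lemma withDensity_dirac_prod (b : β) {g : β × α → ℝ≥0∞} (hg : Measurable g) :
    ((Measure.dirac b).prod ν).withDensity g
      = (Measure.dirac b).prod (ν.withDensity fun s ↦ g (b, s)) := by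
  rw [Measure.dirac_prod, Measure.dirac_prod]
  ext s hs
  rw [withDensity_apply _ hs, setLIntegral_map hs hg measurable_prodMk_left,
    Measure.map_apply measurable_prodMk_left hs,
    withDensity_apply _ (measurable_prodMk_left hs)]

variable [MeasurableSingletonClass β]

lemma integral_dirac_prod {E : Type*} [NormedAddCommGroup E] [NormedSpace ℝ E] (b : β)
    (F : β × α → E) : ∫ x, F x ∂(Measure.dirac b).prod ν = ∫ s, F (b, s) ∂ν := by
  rw [Measure.dirac_prod, (measurableEmbedding_prodMk_left b).integral_map]

lemma integrable_dirac_prod_iff {E : Type*} [NormedAddCommGroup E] (b : β) {F : β × α → E} :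
    Integrable F ((Measure.dirac b).prod ν) ↔ Integrable (fun s ↦ F (b, s)) ν := by
  rw [Measure.dirac_prod, (measurableEmbedding_prodMk_left b).integrable_map_iff]
  rfl

end DiracProd

section Mixture

variable {α : Type*} [MeasurableSpace α] {p : ℝ} {μ ν : Measure α}

noncomputable def mixture (p : ℝ) (μ ν : Measure α) : Measure α :=
  ENNReal.ofReal p • μ + ENNReal.ofReal (1 - p) • ν

lemma mixture_comm (p : ℝ) (μ ν : Measure α) : mixture (1 - p) ν μ = mixture p μ ν := by
  simp [mixture, add_comm]

instance isFiniteMeasure_mixture [IsFiniteMeasure μ] [IsFiniteMeasure ν] :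
    IsFiniteMeasure (mixture p μ ν) := by
  constructor
  simp [mixture, ENNReal.mul_lt_top, measure_lt_top]

lemma isProbabilityMeasure_mixture [IsProbabilityMeasure μ] [IsProbabilityMeasure ν]
    (hp0 : 0 ≤ p) (hp1 : p ≤ 1) : IsProbabilityMeasure (mixture p μ ν) := by
  constructor
  simp [mixture, ← ENNReal.ofReal_add hp0 (sub_nonneg.2 hp1)]

lemma absolutelyContinuous_mixture (hp : 0 < p) : μ ≪ mixture p μ ν :=
  (Measure.absolutelyContinuous_smul (ENNReal.ofReal_pos.2 hp).ne').add_right _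

lemma absolutelyContinuous_mixture_right (hp : p < 1) : ν ≪ mixture p μ ν :=
  mixture_comm p μ ν ▸ absolutelyContinuous_mixture (sub_pos.2 hp)

lemma integral_mixture (hp0 : 0 ≤ p) (hp1 : p ≤ 1) {f : α → ℝ} (hμ : Integrable f μ)
    (hν : Integrable f ν) :
    ∫ x, f x ∂mixture p μ ν = p * ∫ x, f x ∂μ + (1 - p) * ∫ x, f x ∂ν := by
  rw [mixture, integral_add_measure (hμ.smul_measure ENNReal.ofReal_ne_top)
    (hν.smul_measure ENNReal.ofReal_ne_top), integral_smul_measure, integral_smul_measure,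
    ENNReal.toReal_ofReal hp0, ENNReal.toReal_ofReal (sub_nonneg.2 hp1), smul_eq_mul, smul_eq_mul]

lemma rnDeriv_mixture_le [IsFiniteMeasure μ] [IsFiniteMeasure ν] (hp : 0 < p) :
    ∀ᵐ x ∂mixture p μ ν, (μ.rnDeriv (mixture p μ ν) x).toReal ≤ p⁻¹ := by
  have hle : ENNReal.ofReal p • μ ≤ mixture p μ ν := Measure.le_add_right le_rfl
  filter_upwards [Measure.rnDeriv_le_one_of_le hle,
    Measure.rnDeriv_smul_left_of_ne_top μ (mixture p μ ν) ENNReal.ofReal_ne_top] with x hx hsmul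
  rw [hsmul, Pi.smul_apply, smul_eq_mul, mul_comm, Pi.one_apply,
    ← ENNReal.le_inv_iff_mul_le] at hx
  simpa [ENNReal.toReal_inv, hp.le] using
    ENNReal.toReal_mono (ENNReal.inv_ne_top.2 (ENNReal.ofReal_pos.2 hp).ne') hx

lemma integrable_llr_mixture [IsFiniteMeasure μ] [IsFiniteMeasure ν] (hp : 0 < p) :
    Integrable (llr μ (mixture p μ ν)) μ :=
  integrable_llr_of_rnDeriv_le (absolutelyContinuous_mixture hp) (rnDeriv_mixture_le hp)

lemma integrable_llr_mixture_right [IsFiniteMeasure μ] [IsFiniteMeasure ν] (hp : p < 1) :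
    Integrable (llr ν (mixture p μ ν)) ν :=
  mixture_comm p μ ν ▸ integrable_llr_mixture (sub_pos.2 hp)

theorem two_mul_mul_sq_integral_sub_le [IsProbabilityMeasure μ] [IsProbabilityMeasure ν]
    (hp0 : 0 < p) (hp1 : p < 1) {h : α → ℝ} (hm : Measurable h) (hh : ∀ x, h x ∈ Icc 0 1) :
    2 * p * (1 - p) * (∫ x, h x ∂μ - ∫ x, h x ∂ν) ^ 2
      ≤ p * kl μ (mixture p μ ν) + (1 - p) * kl ν (mixture p μ ν) := by
  have := isProbabilityMeasure_mixture (μ := μ) (ν := ν) hp0.le hp1.le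
  have hq : 0 < 1 - p := sub_pos.2 hp1
  have hint (ρ : Measure α) [IsFiniteMeasure ρ] : Integrable h ρ :=
    .of_mem_Icc 0 1 hm.aemeasurable (.of_forall hh)
  have hμ : 2 * (∫ x, h x ∂μ - ∫ x, h x ∂mixture p μ ν) ^ 2 ≤ kl μ (mixture p μ ν) :=
    two_mul_sq_integral_sub_le_kl (absolutelyContinuous_mixture hp0)
      (integrable_llr_mixture hp0) hm.aemeasurable hh
  have hν : 2 * (∫ x, h x ∂ν - ∫ x, h x ∂mixture p μ ν) ^ 2 ≤ kl ν (mixture p μ ν) :=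
    two_mul_sq_integral_sub_le_kl (absolutelyContinuous_mixture_right hp1)
      (integrable_llr_mixture_right hp1) hm.aemeasurable hh
  rw [integral_mixture hp0.le hp1.le (hint μ) (hint ν)] at hμ hν
  nlinarith [mul_le_mul_of_nonneg_left hμ hp0.le, mul_le_mul_of_nonneg_left hν hq.le]

theorem kl_mixture_dirac_prod [IsProbabilityMeasure μ] [IsProbabilityMeasure ν]
    (hp0 : 0 < p) (hp1 : p < 1) :
    kl (mixture p ((Measure.dirac true).prod μ) ((Measure.dirac false).prod ν))
        ((mixture p (Measure.dirac true) (Measure.dirac false)).prod (mixture p μ ν))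
      = p * kl μ (mixture p μ ν) + (1 - p) * kl ν (mixture p μ ν) := by
  set M := mixture p μ ν
  set B := mixture p (Measure.dirac true) (Measure.dirac false)
  set g : Bool × α → ℝ≥0∞ := fun x ↦ (cond x.1 μ ν).rnDeriv M x.2
  have hg : Measurable g :=
    measurable_from_prod_countable_right fun b ↦ Measure.measurable_rnDeriv (cond b μ ν) M
  have hJ : mixture p ((Measure.dirac true).prod μ) ((Measure.dirac false).prod ν)
      = (B.prod M).withDensity g := by
    simp only [B, mixture]
    rw [Measure.add_prod, Measure.prod_smul_left, Measure.prod_smul_left,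
      withDensity_add_measure, withDensity_smul_measure, withDensity_smul_measure,
      withDensity_dirac_prod _ hg, withDensity_dirac_prod _ hg]
    simp only [g, cond_true, cond_false]
    rw [Measure.withDensity_rnDeriv_eq _ _ (absolutelyContinuous_mixture hp0),
      Measure.withDensity_rnDeriv_eq _ _ (absolutelyContinuous_mixture_right hp1)]
  have hrn : ∀ᵐ x ∂mixture p ((Measure.dirac true).prod μ) ((Measure.dirac false).prod ν),
      (mixture p ((Measure.dirac true).prod μ) ((Measure.dirac false).prod ν)).rnDeriv
        (B.prod M) x = g x := by
    rw [hJ]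
    exact withDensity_absolutelyContinuous _ _ |>.ae_le (Measure.rnDeriv_withDensity _ hg)
  calc _ = ∫ x, log (g x).toReal
        ∂mixture p ((Measure.dirac true).prod μ) ((Measure.dirac false).prod ν) :=
      integral_congr_ae (hrn.mono fun x hx ↦ by simp only [hx])
    _ = p * ∫ s, llr μ M s ∂μ + (1 - p) * ∫ s, llr ν M s ∂ν := by
      rw [integral_mixture hp0.le hp1.le
        ((integrable_dirac_prod_iff true).2 (integrable_llr_mixture hp0))
        ((integrable_dirac_prod_iff false).2 (integrable_llr_mixture_right hp1)),
        integral_dirac_prod, integral_dirac_prod]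
      rfl

end Mixture

section AUC

variable {μ ν : Measure ℝ}

lemma integral_measure_Ioi_eq_prod [IsFiniteMeasure μ] [SFinite ν] :
    ∫ y, (μ (Ioi y)).toReal ∂ν = ((μ.prod ν) {x : ℝ × ℝ | x.1 > x.2}).toReal := by
  have hS : MeasurableSet {x : ℝ × ℝ | x.1 > x.2} :=
    measurableSet_lt measurable_snd measurable_fst
  rw [Measure.prod_apply_symm hS, ← integral_toReal
    (measurable_measure_prodMk_right hS).aemeasurable (.of_forall fun y ↦ measure_lt_top μ _)]
  rfl

lemma prod_self_gt_eq_half [IsProbabilityMeasure μ] [NullSingletonClass μ] :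
    ((μ.prod μ) {x : ℝ × ℝ | x.1 > x.2}).toReal = 1 / 2 := by
  set S := {x : ℝ × ℝ | x.1 > x.2}
  have hS : MeasurableSet S := measurableSet_lt measurable_snd measurable_fst
  have hswap : (μ.prod μ) (Prod.swap ⁻¹' S) = (μ.prod μ) S := by
    rw [← Measure.map_apply measurable_swap hS, Measure.prod_swap]
  have hdiag : (μ.prod μ) {x | x.1 = x.2} = 0 := by
    rw [Measure.prod_apply_symm (measurableSet_eq_fun measurable_fst measurable_snd)]
    simp [Set.preimage, measure_singleton]
  have hcompl : (μ.prod μ) Sᶜ = (μ.prod μ) S := by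
    refine le_antisymm ?_ (hswap ▸ measure_mono fun x (hx : x.2 > x.1) ↦ hx.not_gt)
    calc (μ.prod μ) Sᶜ ≤ (μ.prod μ) (Prod.swap ⁻¹' S ∪ {x | x.1 = x.2}) :=
          measure_mono fun x (hx : ¬ x.1 > x.2) ↦ (not_lt.1 hx).lt_or_eq
      _ ≤ (μ.prod μ) S := by
          simpa [hdiag, hswap] using
            measure_union_le (μ := μ.prod μ) (Prod.swap ⁻¹' S) {x | x.1 = x.2}
  have h := probReal_add_probReal_compl (μ := μ.prod μ) hS
  rw [measureReal_def, measureReal_def, hcompl] at h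
  linarith

end AUC

theorem stmt6 (Pp Pm : Measure ℝ) [IsProbabilityMeasure Pp] [IsProbabilityMeasure Pm]
    (hac : Pp ≪ MeasureTheory.volume)
    (p : ℝ) (hp : p ∈ Set.Ioo (0 : ℝ) 1) :
    |((Pp.prod Pm) {x : ℝ × ℝ | x.1 > x.2}).toReal - 1 / 2|
      ≤ Real.sqrt
          ((kl (ENNReal.ofReal p • ((Measure.dirac true).prod Pp)
                  + ENNReal.ofReal (1 - p) • ((Measure.dirac false).prod Pm))
               ((ENNReal.ofReal p • Measure.dirac (true : Bool)
                  + ENNReal.ofReal (1 - p) • Measure.dirac (false : Bool)).prod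
                 (ENNReal.ofReal p • Pp + ENNReal.ofReal (1 - p) • Pm)))
            / (2 * p * (1 - p))) := by
  obtain ⟨hp0, hp1⟩ := hp
  have : NullSingletonClass Pp := ⟨fun y ↦ hac Real.volume_singleton⟩
  have hauc := two_mul_mul_sq_integral_sub_le (μ := Pp) (ν := Pm) hp0 hp1
    (h := fun y ↦ (Pp (Ioi y)).toReal)
    (Antitone.measurable fun _ _ hxy ↦ measureReal_mono (Ioi_subset_Ioi hxy))
    fun y ↦ ⟨measureReal_nonneg, measureReal_le_one⟩
  rw [integral_measure_Ioi_eq_prod, integral_measure_Ioi_eq_prod, prod_self_gt_eq_half,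
    ← kl_mixture_dirac_prod hp0 hp1] at hauc
  refine abs_le_sqrt ((le_div_iff₀ (by have := sub_pos.2 hp1; positivity)).2 ?_)
  unfold mixture at hauc
  linarith
end
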